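/- Suppose ⟨∇²f(x⁰) u, u⟩ ≤ L₁·‖u‖² for all u ∈ E (which holds when ∇f is L₁-Lipschitz). Let c > 0, ρ ∈ [0,1], η ∈ (0,1), suppose r(x⁰) > 0, and set μ = c·r(x⁰)^ρ and H = ∇²f(x⁰) + μ·Id. Let x̃ be a minimizer of q over E and let x̂ ∈ E satisfy r_H(x̂) ≤ η·r(x⁰)^{1+ρ}, where r_H(x) = ‖x − prox_g(x − ∇f(x⁰) − H(x − x⁰))‖. Then ‖x̂ − x̃‖ ≤ (η·(L₁ + |1 − μ|)/c)·r(x⁰) + η·r(x⁰)^{1+ρ}. -/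

import Mathlib

open scoped RealInnerProductSpace

abbrev E (n : ℕ) := EuclideanSpace ℝ (Fin n)

/-!
Write `p = prox_g(x̂ − ∇f(x⁰) − H(x̂ − x⁰))`, `e = x̂ − p` (so `‖e‖ = r_H(x̂)`) and `w = p − x̃`.
Both `p` and `x̃` minimize a differentiable function plus the convex `g`; adding their first-order
optimality conditions cancels `g` and leaves `⟪H w, w⟫ ≤ ⟪e − H e, w⟫`. Convexity of `f` makes
`∇²f(x⁰)` positive semidefinite, so `H ⪰ μ·Id` and `‖∇²f(x⁰)‖ ≤ L₁`; hence
`μ‖w‖ ≤ (L₁ + |1 − μ|)‖e‖`, and the bound follows from `‖x̂ − x̃‖ ≤ ‖e‖ + ‖w‖` and `μ = c·r(x⁰)^ρ`.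
-/

open Set Filter Topology

section

variable {F : Type*} [NormedAddCommGroup F] [InnerProductSpace ℝ F]

theorem ConvexOn.inner_hessian_self_nonneg [CompleteSpace F] {f : F → ℝ} {f' : F → F}
    {A : F →L[ℝ] F} {x : F} (hf : ConvexOn ℝ univ f) (hgrad : ∀ y, HasGradientAt f (f' y) y)
    (hA : HasFDerivAt f' A x) (u : F) : 0 ≤ ⟪A u, u⟫ := by
  let line : ℝ →ᵃ[ℝ] F := AffineMap.lineMap x (x + u)
  have hline_eq : (line : ℝ → F) = fun t => t • u + x := by
    ext t; simp [line, AffineMap.lineMap_apply]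
  have hline (t : ℝ) : HasDerivAt line u t := by
    simpa [hline_eq] using ((hasDerivAt_id t).smul_const u).add_const x
  have hderiv (t : ℝ) : HasDerivAt (f ∘ line) ⟪f' (line t), u⟫ t := by
    simpa using (hgrad (line t)).hasFDerivAt.comp_hasDerivAt t (hline t)
  have hmono : Monotone fun t => ⟪f' (line t), u⟫ := by
    have := (hf.comp_affineMap line).monotoneOn_deriv fun t _ => (hderiv t).differentiableAt
    rwa [preimage_univ, monotoneOn_univ, funext fun t => (hderiv t).deriv] at this
  have hslope : HasDerivAt (fun t => ⟪f' (line t), u⟫) ⟪A u, u⟫ 0 := by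
    have h0 : line 0 = x := by simp [hline_eq]
    have := (h0 ▸ hA).comp_hasDerivAt (0 : ℝ) (hline 0)
    simpa using this.inner ℝ (hasDerivAt_const 0 u)
  exact hslope.nonneg_of_monotone hmono

theorem ContinuousLinearMap.opNorm_le_of_abs_inner_self_le {T : F →L[ℝ] F}
    (hT : (T : F →ₗ[ℝ] F).IsSymmetric) {L : ℝ} (hL : 0 ≤ L)
    (h : ∀ x, |⟪T x, x⟫| ≤ L * ‖x‖ ^ 2) : ‖T‖ ≤ L := by
  rw [T.norm_eq_iSup_rayleighQuotient hT]
  refine ciSup_le fun x => ?_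
  rcases eq_or_ne x 0 with rfl | hx
  · simpa using hL
  rw [ContinuousLinearMap.rayleighQuotient, ContinuousLinearMap.reApplyInnerSelf_apply,
    abs_div, abs_of_pos (by positivity : 0 < ‖x‖ ^ 2), div_le_iff₀ (by positivity)]
  simpa using h x

theorem ConvexOn.fderiv_sub_add_sub_nonneg_of_forall_le {h g : F → ℝ} {h' : F →L[ℝ] ℝ} {x : F}
    (hg : ConvexOn ℝ univ g) (hh : HasFDerivAt h h' x) (hmin : ∀ y, h x + g x ≤ h y + g y)
    (u : F) : 0 ≤ h' (u - x) + g u - g x := by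
  set d := u - x
  set φ : ℝ → ℝ := fun t => h (x + t • d)
  have hφ : HasDerivAt φ (h' d) 0 := by
    have hline := (hasDerivAt_id (0 : ℝ)).smul_const d |>.const_add x
    have hh0 : HasFDerivAt h h' (x + (0 : ℝ) • d) := by simpa using hh
    exact hh0.comp_hasDerivAt 0 (by simpa using hline)
  have hchord : ∀ t ∈ Ioc (0 : ℝ) 1, g x - g u ≤ slope φ 0 t := by
    rintro t ⟨ht0, ht1⟩
    have hconv := hg.2 (mem_univ x) (mem_univ u) (sub_nonneg.2 ht1) ht0.le (by ring)
    rw [show (1 - t) • x + t • u = x + t • d by simp only [d]; module] at hconv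
    have hmin_t := hmin (x + t • d)
    rw [slope_def_field, le_div_iff₀ (by simpa using ht0)]
    simp only [φ, sub_zero, zero_smul, add_zero, smul_eq_mul] at hconv ⊢
    linarith
  have hlim : Tendsto (slope φ 0) (𝓝[>] 0) (𝓝 (h' d)) :=
    (hasDerivAt_iff_tendsto_slope.1 hφ).mono_left (nhdsWithin_mono 0 fun t ht => ne_of_gt ht)
  have := ge_of_tendsto hlim (eventually_of_mem (Ioc_mem_nhdsGT one_pos) hchord)
  linarith

theorem ConvexOn.inner_prox_sub_nonneg {g : F → ℝ} (hg : ConvexOn ℝ univ g) {v p : F}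
    (hp : ∀ u, (1/2) * ‖p - v‖ ^ 2 + g p ≤ (1/2) * ‖u - v‖ ^ 2 + g u) (u : F) :
    0 ≤ ⟪p - v, u - p⟫ + g u - g p := by
  have hd : HasFDerivAt (fun y => (1/2) * ‖y - v‖ ^ 2) (innerSL ℝ (p - v)) p := by
    refine ((hasFDerivAt_sub_const (𝕜 := ℝ) (x := p) v).norm_sq.const_mul (1/2)).congr_fderiv ?_
    ext y
    simp
  exact hg.fderiv_sub_add_sub_nonneg_of_forall_le hd hp u

theorem hasFDerivAt_quadratic_model {H : F →L[ℝ] F} (hH : (H : F →ₗ[ℝ] F).IsSymmetric)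
    (a : ℝ) (b x₀ x : F) :
    HasFDerivAt (fun y => a + ⟪b, y - x₀⟫ + (1/2) * ⟪H (y - x₀), y - x₀⟫)
      (innerSL ℝ (b + H (x - x₀))) x := by
  have hsub := hasFDerivAt_sub_const (𝕜 := ℝ) (x := x) x₀
  have hquad := (H.hasFDerivAt.comp x hsub).inner ℝ hsub
  have hlin := (hasFDerivAt_const (𝕜 := ℝ) b x).inner ℝ hsub
  refine ((hlin.const_add a).add (hquad.const_mul (1/2))).congr_fderiv ?_
  ext y
  have hsymm : ⟪H y, x - x₀⟫ = ⟪H (x - x₀), y⟫ := by rw [hH.apply_clm, real_inner_comm]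
  simp only [one_div, Function.comp_apply, map_sub, ContinuousLinearMap.comp_id, add_apply,
    ContinuousLinearMap.comp_apply, ContinuousLinearMap.prod_apply, zero_apply,
    ContinuousLinearMap.id_apply, fderivInnerCLM_apply, inner_zero_left, add_zero, smul_apply,
    smul_eq_mul, map_add, coe_innerSL_apply, sub_apply, add_right_inj]
  rw [hsymm, map_sub, inner_sub_left]
  ring

theorem ConvexOn.inner_apply_le_of_prox_of_forall_le {g : F → ℝ} (hg : ConvexOn ℝ univ g)
    {H : F →L[ℝ] F} (hH : (H : F →ₗ[ℝ] F).IsSymmetric) {a : ℝ} {b x₀ xt xh p : F}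
    (hp : ∀ u, (1/2) * ‖p - (xh - b - H (xh - x₀))‖ ^ 2 + g p ≤
      (1/2) * ‖u - (xh - b - H (xh - x₀))‖ ^ 2 + g u)
    (hxt : ∀ y, a + ⟪b, xt - x₀⟫ + (1/2) * ⟪H (xt - x₀), xt - x₀⟫ + g xt ≤
      a + ⟪b, y - x₀⟫ + (1/2) * ⟪H (y - x₀), y - x₀⟫ + g y) :
    ⟪H (p - xt), p - xt⟫ ≤ ⟪(xh - p) - H (xh - p), p - xt⟫ := by
  set v := xh - b - H (xh - x₀)
  have hp_opt : 0 ≤ ⟪p - v, xt - p⟫ + g xt - g p := hg.inner_prox_sub_nonneg hp xt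
  have hxt_opt : 0 ≤ ⟪b + H (xt - x₀), p - xt⟫ + g p - g xt :=
    hg.fderiv_sub_add_sub_nonneg_of_forall_le (hasFDerivAt_quadratic_model hH a b x₀ xt) hxt p
  have hflip : ⟪p - v, xt - p⟫ = ⟪v - p, p - xt⟫ := by rw [← inner_neg_neg, neg_sub, neg_sub]
  have hsum : 0 ≤ ⟪(v - p) + (b + H (xt - x₀)), p - xt⟫ := by
    rw [inner_add_left]; linarith
  have hvec : (v - p) + (b + H (xt - x₀)) = (xh - p) - H (xh - p) - H (p - xt) := by
    simp only [v, map_sub]; abel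
  rw [hvec, inner_sub_left] at hsum
  linarith

theorem mul_norm_le_of_inner_add_smul_le {A : F →L[ℝ] F} (hA : ∀ x, 0 ≤ ⟪A x, x⟫) {μ : ℝ}
    {e w : F} (h : ⟪A w + μ • w, w⟫ ≤ ⟪e - (A e + μ • e), w⟫) :
    μ * ‖w‖ ≤ (‖A‖ + |1 - μ|) * ‖e‖ := by
  have hlow : μ * ‖w‖ ^ 2 ≤ ⟪A w + μ • w, w⟫ := by
    rw [inner_add_left, real_inner_smul_left, real_inner_self_eq_norm_sq]
    linarith [hA w]
  have hup : ⟪e - (A e + μ • e), w⟫ ≤ (‖A‖ + |1 - μ|) * ‖e‖ * ‖w‖ := by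
    have hA_le : -⟪A e, w⟫ ≤ ‖A‖ * ‖e‖ * ‖w‖ :=
      (neg_le_abs _).trans <| (abs_real_inner_le_norm _ _).trans <|
        mul_le_mul_of_nonneg_right (A.le_opNorm e) (norm_nonneg w)
    have hid_le : (1 - μ) * ⟪e, w⟫ ≤ |1 - μ| * (‖e‖ * ‖w‖) :=
      (le_abs_self _).trans <| (abs_mul _ _).trans_le <|
        mul_le_mul_of_nonneg_left (abs_real_inner_le_norm e w) (abs_nonneg _)
    rw [inner_sub_left, inner_add_left, real_inner_smul_left]
    linarith
  rcases (norm_nonneg w).eq_or_lt with hw | hw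
  · rw [← hw, mul_zero]
    positivity
  · refine le_of_mul_le_mul_right ?_ hw
    nlinarith

end

theorem stmt9_general {n : ℕ} (f g : E n → ℝ) (f' : E n → E n)
    (hess : E n → E n →L[ℝ] E n) (prox : E n → E n)
    (hfconv : ConvexOn ℝ Set.univ f)
    (hgrad : ∀ x, HasGradientAt f (f' x) x)
    (hhess : ∀ x, HasFDerivAt f' (hess x) x)
    (hsa : ∀ x u w, ⟪hess x u, w⟫ = ⟪u, hess x w⟫)
    (hgconv : ConvexOn ℝ Set.univ g)
    (hprox : ∀ v u, (1/2) * ‖prox v - v‖ ^ 2 + g (prox v) ≤ (1/2) * ‖u - v‖ ^ 2 + g u)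
    (r : E n → ℝ) (hr : ∀ x, r x = ‖x - prox (x - f' x)‖)
    (x₀ : E n) (L₁ c ρ η : ℝ)
    (hub : ∀ u, ⟪hess x₀ u, u⟫ ≤ L₁ * ‖u‖ ^ 2)
    (hc : 0 < c)
    (hrx₀ : 0 < r x₀)
    (μ : ℝ) (hμ : μ = c * r x₀ ^ ρ)
    (H : E n →L[ℝ] E n) (hH : H = hess x₀ + μ • ContinuousLinearMap.id ℝ (E n))
    (q : E n → ℝ)
    (hq : ∀ y, q y = f x₀ + ⟪f' x₀, y - x₀⟫ + (1/2) * ⟪H (y - x₀), y - x₀⟫ + g y)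
    (xt : E n) (hxt : ∀ y, q xt ≤ q y)
    (rH : E n → ℝ) (hrH : ∀ x, rH x = ‖x - prox (x - f' x₀ - H (x - x₀))‖)
    (xh : E n) (hxh : rH xh ≤ η * r x₀ ^ (1 + ρ)) :
    ‖xh - xt‖ ≤ (η * (L₁ + |1 - μ|) / c) * r x₀ + η * r x₀ ^ (1 + ρ) := by
  have hpsd : ∀ u, 0 ≤ ⟪hess x₀ u, u⟫ := hfconv.inner_hessian_self_nonneg hgrad (hhess x₀)
  have hμ_pos : 0 < μ := hμ ▸ mul_pos hc (Real.rpow_pos_of_pos hrx₀ ρ)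
  have hL₁ : 0 ≤ L₁ := by
    set z := x₀ - prox (x₀ - f' x₀)
    have hz : 0 < ‖z‖ := hr x₀ ▸ hrx₀
    nlinarith [hpsd z, hub z, pow_pos hz 2]
  have hnorm : ‖hess x₀‖ ≤ L₁ := (hess x₀).opNorm_le_of_abs_inner_self_le (hsa x₀) hL₁
    fun u => (abs_of_nonneg (hpsd u)).symm ▸ hub u
  have hH_apply : ∀ u, H u = hess x₀ u + μ • u := by simp [hH]
  have hH_symm : (H : E n →ₗ[ℝ] E n).IsSymmetric := fun u w => by
    simp only [ContinuousLinearMap.coe_coe, hH_apply, inner_add_left, inner_add_right,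
      real_inner_smul_left, real_inner_smul_right, hsa]
  set p := prox (xh - f' x₀ - H (xh - x₀))
  have hkey : ⟪H (p - xt), p - xt⟫ ≤ ⟪(xh - p) - H (xh - p), p - xt⟫ :=
    hgconv.inner_apply_le_of_prox_of_forall_le hH_symm (hprox _) fun y => by
      simpa only [hq] using hxt y
  have hw := mul_norm_le_of_inner_add_smul_le hpsd (by simpa only [hH_apply] using hkey)
  have he : ‖xh - p‖ ≤ η * r x₀ ^ (1 + ρ) := hrH xh ▸ hxh
  have hw' : μ * ‖p - xt‖ ≤ μ * (η * (L₁ + |1 - μ|) / c * r x₀) := calc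
    _ ≤ (‖hess x₀‖ + |1 - μ|) * ‖xh - p‖ := hw
    _ ≤ (L₁ + |1 - μ|) * (η * r x₀ ^ (1 + ρ)) :=
      mul_le_mul (by linarith) he (norm_nonneg _) (by positivity)
    _ = μ * (η * (L₁ + |1 - μ|) / c * r x₀) := by
      rw [hμ, Real.rpow_add hrx₀, Real.rpow_one]; field_simp
  calc ‖xh - xt‖ ≤ ‖xh - p‖ + ‖p - xt‖ := norm_sub_le_norm_sub_add_norm_sub _ _ _
    _ ≤ _ := by linarith [le_of_mul_le_mul_left hw' hμ_pos]

/-- If `⟨∇²f(x⁰)u,u⟩ ≤ L₁‖u‖²`, `c > 0`, `ρ ∈ [0,1]`, `η ∈ (0,1)`,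
`r(x⁰) > 0`, `μ = c·r(x⁰)^ρ`, `H = ∇²f(x⁰) + μ·Id`, `x̃` minimizes `q`, and
`r_H(x̂) ≤ η·r(x⁰)^{1+ρ}`, then
`‖x̂ − x̃‖ ≤ (η(L₁ + |1 − μ|)/c)·r(x⁰) + η·r(x⁰)^{1+ρ}`. -/
theorem stmt9 {n : ℕ} (f g : E n → ℝ) (f' : E n → E n)
    (hess : E n → E n →L[ℝ] E n) (prox : E n → E n)
    (hfconv : ConvexOn ℝ Set.univ f) (hfC2 : ContDiff ℝ 2 f)
    (hgrad : ∀ x, HasGradientAt f (f' x) x)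
    (hhess : ∀ x, HasFDerivAt f' (hess x) x)
    (hsa : ∀ x u w, ⟪hess x u, w⟫ = ⟪u, hess x w⟫)
    (hgconv : ConvexOn ℝ Set.univ g) (hgcont : Continuous g)
    (hprox : ∀ v u, (1/2) * ‖prox v - v‖ ^ 2 + g (prox v) ≤ (1/2) * ‖u - v‖ ^ 2 + g u)
    (r : E n → ℝ) (hr : ∀ x, r x = ‖x - prox (x - f' x)‖)
    (x₀ : E n) (L₁ c ρ η : ℝ)
    (hub : ∀ u, ⟪hess x₀ u, u⟫ ≤ L₁ * ‖u‖ ^ 2)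
    (hc : 0 < c) (hρ : ρ ∈ Set.Icc (0:ℝ) 1) (hη : η ∈ Set.Ioo (0:ℝ) 1)
    (hrx₀ : 0 < r x₀)
    (μ : ℝ) (hμ : μ = c * r x₀ ^ ρ)
    (H : E n →L[ℝ] E n) (hH : H = hess x₀ + μ • ContinuousLinearMap.id ℝ (E n))
    (q : E n → ℝ)
    (hq : ∀ y, q y = f x₀ + ⟪f' x₀, y - x₀⟫ + (1/2) * ⟪H (y - x₀), y - x₀⟫ + g y)
    (xt : E n) (hxt : ∀ y, q xt ≤ q y)
    (rH : E n → ℝ) (hrH : ∀ x, rH x = ‖x - prox (x - f' x₀ - H (x - x₀))‖)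
    (xh : E n) (hxh : rH xh ≤ η * r x₀ ^ (1 + ρ)) :
    ‖xh - xt‖ ≤ (η * (L₁ + |1 - μ|) / c) * r x₀ + η * r x₀ ^ (1 + ρ) :=
  stmt9_general f g f' hess prox hfconv hgrad hhess hsa hgconv hprox r hr x₀ L₁ c ρ η hub hc hrx₀ μ
    hμ H hH q hq xt hxt rH hrH xh hxh
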